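/- arXiv:2005.07103 — 3 statements merged into one kernel-verified Lean document; each statement's English description precedes it below -/
import Mathlib

section
/- Structure of supports of cocycles within a simplex. Let j ∈ {1,…,d−1}, let f be a j-cocycle in a d-complex G with support S, let k satisfy j+1 ≤ k ≤ d, let K be a k-simplex of G, and let S_K denote the set of j-simplices of S contained in K. Then: (i) either S_K = ∅, or |S_K| ≥ k−j+1 and the union of the elements of S_K equals K; (ii) if |S_K| = k−j+1, then S_K forms a j-flower in K, i.e. S_K = F(K,C) for some j-set C ⊂ K. -/
/-!
If `A` lies in the support and `v ∈ K \ A`, the cocycle condition on the `(j+1)`-simplex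
`A ∪ {v}` forces a second support face of it, and that face must contain `v`. Hence the support
in `K` covers `K`, and `A` together with one such face `A ∪ {v} \ {u v}` for each of the `k - j`
vertices `v ∈ K \ A` gives `k - j + 1` distinct members. If there are no others, the swapped-out
vertex `u v` cannot depend on `v`: were `u v ≠ u w`, the simplex `A ∪ {v, w} \ {u v}` would
contain exactly one support face. So the support is the flower with centre `A \ {u v}`.
-/

open MeasureTheory Filter Finset Asymptotics
open scoped Classical

noncomputable section

namespace RSC

/-! ### Simplicial complexes on the vertex set `Fin N` -/

variable {N : ℕ}

/-- A simplicial complex on `[N]`: a downward-closed family of non-empty finite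
subsets of the vertex set containing all singletons. -/
def IsComplex (G : Set (Finset (Fin N))) : Prop :=
  (∀ A ∈ G, A.Nonempty) ∧ (∀ v : Fin N, ({v} : Finset (Fin N)) ∈ G) ∧
    ∀ A ∈ G, ∀ B : Finset (Fin N), B ⊆ A → B.Nonempty → B ∈ G

/-- A `d`-dimensional simplicial complex: no `(d+1)`-simplices, i.e. all faces have
at most `d+1` vertices. -/
def IsDComplex (d : ℕ) (G : Set (Finset (Fin N))) : Prop :=
  IsComplex G ∧ ∀ A ∈ G, A.card ≤ d + 1

/-- `σ` is an ordered simplex of `G` (on `m` vertices, i.e. of dimension `m-1`). -/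
def OrdSimp (G : Set (Finset (Fin N))) {m : ℕ} (σ : Fin m → Fin N) : Prop :=
  Function.Injective σ ∧ Finset.image σ Finset.univ ∈ G

/-- An `(m-1)`-dimensional cochain of `G` with coefficients in `R`: a function on
ordered `m`-tuples vanishing off the ordered simplices of `G` and changing sign
under transpositions of two vertices. -/
def IsCochain (G : Set (Finset (Fin N))) (m : ℕ) {R : Type} [AddCommGroup R]
    (f : (Fin m → Fin N) → R) : Prop :=
  (∀ σ : Fin m → Fin N, ¬ OrdSimp G σ → f σ = 0) ∧
    ∀ (σ : Fin m → Fin N) (a b : Fin m), a ≠ b → f (σ ∘ Equiv.swap a b) = - f σ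

/-- The coboundary of a function on ordered `m`-tuples. -/
def delta {R : Type} [AddCommGroup R] {m : ℕ} (g : (Fin m → Fin N) → R) :
    (Fin (m + 1) → Fin N) → R :=
  fun σ => ∑ i : Fin (m + 1), (-1 : ℤ) ^ (i : ℕ) • g (σ ∘ i.succAbove)

/-- An `(m-1)`-dimensional cocycle: a cochain whose coboundary vanishes on all
ordered `(m+1)`-tuples forming simplices of `G`. -/
def IsCocycle (G : Set (Finset (Fin N))) (m : ℕ) {R : Type} [AddCommGroup R]
    (f : (Fin m → Fin N) → R) : Prop :=
  IsCochain G m f ∧ ∀ σ : Fin (m + 1) → Fin N, OrdSimp G σ → delta f σ = 0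

/-- `f` (a function on ordered `(m+1)`-tuples) is an `m`-dimensional coboundary:
on the ordered simplices of `G` it agrees with the coboundary of an
`(m-1)`-dimensional cochain. -/
def IsCobound (G : Set (Finset (Fin N))) (m : ℕ) {R : Type} [AddCommGroup R]
    (f : (Fin (m + 1) → Fin N) → R) : Prop :=
  ∃ g : (Fin m → Fin N) → R, IsCochain G m g ∧
    ∀ σ : Fin (m + 1) → Fin N, OrdSimp G σ → f σ = delta g σ

/-- The support of a cochain: the unordered simplices on which it does not vanish. -/
def cochainSupport {R : Type} [AddCommGroup R] {m : ℕ} (f : (Fin m → Fin N) → R) :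
    Set (Finset (Fin N)) :=
  {A | ∃ σ : Fin m → Fin N, Function.Injective σ ∧ Finset.image σ Finset.univ = A ∧ f σ ≠ 0}

/-- `H^j(G;R) = 0`: every `j`-cocycle is a `j`-coboundary. -/
def HTrivial (G : Set (Finset (Fin N))) (R : Type) [AddCommGroup R] (j : ℕ) : Prop :=
  ∀ f : (Fin (j + 1) → Fin N) → R, IsCocycle G (j + 1) f → IsCobound G j f

/-- Topological connectedness (equivalently `H^0(G;R) = R`): any two vertices are
joined by a sequence of vertices in which consecutive vertices share a simplex. -/
def TopConnected (G : Set (Finset (Fin N))) : Prop :=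
  ∀ u v : Fin N, Relation.ReflTransGen (fun x y => ∃ A ∈ G, x ∈ A ∧ y ∈ A) u v

/-- `R`-cohomological `j`-connectedness: `H^0(G;R) = R` and `H^i(G;R) = 0` for
all `1 ≤ i ≤ j`. -/
def CohomConnected (G : Set (Finset (Fin N))) (R : Type) [AddCommGroup R] (j : ℕ) : Prop :=
  TopConnected G ∧ ∀ i : ℕ, 1 ≤ i → i ≤ j → HTrivial G R i

/-- `A` is a `j`-shell of `G`: a `(j+2)`-set all of whose `(j+1)`-subsets are
`j`-simplices of `G`. -/
def IsShell (G : Set (Finset (Fin N))) (j : ℕ) (A : Finset (Fin N)) : Prop :=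
  A.card = j + 2 ∧ ∀ B ⊆ A, B.card = j + 1 → B ∈ G

/-- The `j`-flower in `K` with centre `C`: the petals `C ∪ {w}`, `w ∈ K \ C`. -/
def flower (K C : Finset (Fin N)) : Set (Finset (Fin N)) :=
  {P | ∃ w ∈ K, w ∉ C ∧ P = insert w C}

/-- `(K, C)` is a copy of `M_{j,k}` in `G`. -/
def IsCopyM (G : Set (Finset (Fin N))) (j k : ℕ) (K C : Finset (Fin N)) : Prop :=
  K ∈ G ∧ K.card = k + 1 ∧ C ⊆ K ∧ C.card = j ∧
    (∀ σ ∈ G, (∃ w ∈ K, w ∉ C ∧ insert w C ⊆ σ) → σ ⊆ K) ∧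
    (k = j → ∀ x ∈ C, ∀ y ∈ K, y ∉ C → x < y)

/-- `(K, C, w, a)` is a copy of `M̂_{j,k}` in `G`. -/
def IsCopyMhat (G : Set (Finset (Fin N))) (j k : ℕ) (K C : Finset (Fin N)) (w a : Fin N) :
    Prop :=
  IsCopyM G j k K C ∧ w ∈ K ∧ w ∉ C ∧ a ∉ K ∧
    IsShell G j (insert a (insert w C)) ∧ (k = j → ∀ x ∈ K, x ≤ w)

/-- `G + B`: adding the set `B` together with its downward closure to `G`. -/
def addSet (G : Set (Finset (Fin N))) (B : Finset (Fin N)) : Set (Finset (Fin N)) :=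
  G ∪ {A | A.Nonempty ∧ A ⊆ B}

/-- `J` is `K`-localised: every simplex of `G` containing `J` is contained in `K`. -/
def KLocalised (G : Set (Finset (Fin N))) (K J : Finset (Fin N)) : Prop :=
  ∀ σ ∈ G, J ⊆ σ → σ ⊆ K

/-- A `k`-simplex `K` is a local `j`-obstacle: it contains at least `k - j + 1`
many `K`-localised `j`-simplices. -/
def LocalObstacle (G : Set (Finset (Fin N))) (j k : ℕ) (K : Finset (Fin N)) : Prop :=
  K ∈ G ∧ K.card = k + 1 ∧
    k - j + 1 ≤ {J : Finset (Fin N) | J ⊆ K ∧ J.card = j + 1 ∧ J ∈ G ∧ KLocalised G K J}.ncard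

/-- The number of copies of `M_{j,k}` in `G`. -/
def countM (j k : ℕ) (G : Set (Finset (Fin N))) : ℕ :=
  Set.ncard {KC : Finset (Fin N) × Finset (Fin N) | IsCopyM G j k KC.1 KC.2}

/-! ### The random model: independent uniform birth times -/

/-- The sample space: a birth time for each set of vertices. -/
abbrev Omega (n : ℕ) : Type := Finset (Fin n) → ℝ

/-- The probability measure: independent `Uniform[0,1]` birth times. -/
def P (n : ℕ) : Measure (Omega n) :=
  Measure.pi fun _ => volume.restrict (Set.Icc (0 : ℝ) 1)

/-- An event holds with high probability. -/
def WHP (E : (n : ℕ) → Set (Omega n)) : Prop :=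
  Tendsto (fun n => P n (E n)) atTop (nhds 1)

/-- The random `d`-complex determined by birth times `ω`: all singletons together
with the downward closure of all sets `K` with `2 ≤ |K| ≤ d+1` whose birth time is
at most `p (|K| - 1)`; i.e. the downward closure of the non-uniform binomial
random hypergraph `G(n,p)`. -/
def birthComplex (d n : ℕ) (p : ℕ → ℝ) (ω : Omega n) : Set (Finset (Fin n)) :=
  {A | A.Nonempty ∧ (A.card = 1 ∨ ∃ K : Finset (Fin n),
    A ⊆ K ∧ 2 ≤ K.card ∧ K.card ≤ d + 1 ∧ ω K ≤ p (K.card - 1))}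

/-- The process `𝒢_τ = 𝒢(n, τ p̄)`: the complex of all simplices with scaled birth
time at most `τ`. -/
def Gproc (d : ℕ) (p : ℕ → ℕ → ℝ) (n : ℕ) (τ : ℝ) (ω : Omega n) : Set (Finset (Fin n)) :=
  birthComplex d n (fun k => τ * p n k) ω

/-- `G` contains a copy of `M̂_{j,k}` for some `j ≤ k ≤ d`. -/
def ContainsMhat (d j : ℕ) {n : ℕ} (G : Set (Finset (Fin n))) : Prop :=
  ∃ k, j ≤ k ∧ k ≤ d ∧ ∃ K C : Finset (Fin n), ∃ w a : Fin n, IsCopyMhat G j k K C w a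

/-- The hitting time `τ_j^*` for the disappearance of the last minimal obstruction. -/
def tstar (d j : ℕ) (p : ℕ → ℕ → ℝ) (n : ℕ) (ω : Omega n) : ℝ :=
  sSup {τ : ℝ | 0 ≤ τ ∧ ContainsMhat d j (Gproc d p n τ ω)}

/-! ### Directions and their parameters -/

/-- A direction `p̄` together with its parametrisation `ᾱ, β̄, γ̄`
(`p k n` is `p̄_k(n)`, `β n k` is `β̄_k(n)`). -/
structure DirData where
  p : ℕ → ℕ → ℝ
  α : ℕ → ℝ
  β : ℕ → ℕ → ℝ
  γ : ℕ → ℝ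

/-- `j`-admissibility of a direction (Definition 2.3). -/
def IsAdmissible (d j : ℕ) (D : DirData) : Prop :=
  (∀ n k, 0 ≤ D.p n k) ∧
  (∀ k, 1 ≤ k → k ≤ d → ∀ n : ℕ,
    D.p n k = (D.α k * Real.log n + D.β n k) / (n : ℝ) ^ ((k : ℝ) - (j : ℝ) + D.γ k)
      * (Nat.factorial (k - j) : ℝ)) ∧
  (∀ k, 1 ≤ k → k ≤ d → (D.α k = 0 ∨ D.γ k = 0) ∧ 0 ≤ D.α k ∧ 0 ≤ D.γ k) ∧
  (∀ k, 1 ≤ k → k ≤ d → D.α k = 0 →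
    (∀ n, D.β n k = 0) ∨ ((∀ n, 0 < D.β n k) ∧ ∀ ε : ℝ, 0 < ε →
      ((fun n => D.β n k) =o[atTop] fun n : ℕ => (n : ℝ) ^ ε) ∧
      ((fun n : ℕ => (n : ℝ) ^ (-ε)) =o[atTop] fun n => D.β n k))) ∧
  (∀ k, 1 ≤ k → k ≤ d → D.γ k = 0 →
    (fun n => |D.β n k|) =o[atTop] fun n : ℕ => Real.log n) ∧
  (∃ k, j + 1 ≤ k ∧ k ≤ d ∧ 0 < D.α k)

/-- `λ_k`, computed from parameter functions. -/
def lamP (d j : ℕ) (α γ : ℕ → ℝ) (k : ℕ) : ℝ :=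
  (j : ℝ) + 1 - γ k - ((k : ℝ) - (j : ℝ) + 1) * ∑ i ∈ Finset.Icc (j + 1) d, α i

/-- `μ_k`, computed from parameter functions. -/
def muP (d j : ℕ) (α : ℕ → ℝ) (β : ℕ → ℕ → ℝ) (γ : ℕ → ℝ) (p : ℕ → ℕ → ℝ)
    (n k : ℕ) : ℝ :=
  -(((k : ℝ) - (j : ℝ) + 1) * ∑ i ∈ Finset.Icc (j + 1) d, β n i / (n : ℝ) ^ (γ i)) +
    (if 1 < p n k then 0
     else if α k ≠ 0 then Real.log (Real.log n)
     else Real.log (β n k))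

/-- `ν_k`, computed from parameter functions. -/
def nuP (j : ℕ) (α : ℕ → ℝ) (k : ℕ) : ℝ :=
  if k = j then -Real.log (Nat.factorial (j + 1) : ℝ)
  else if α k ≠ 0 then
    -Real.log (Nat.factorial j : ℝ) - Real.log ((k : ℝ) - (j : ℝ) + 1) + Real.log (α k)
  else -Real.log (Nat.factorial j : ℝ) - Real.log ((k : ℝ) - (j : ℝ) + 1)

def DirData.lam (D : DirData) (d j k : ℕ) : ℝ := lamP d j D.α D.γ k

def DirData.mu (D : DirData) (d j : ℕ) (n k : ℕ) : ℝ := muP d j D.α D.β D.γ D.p n k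

def DirData.nu (D : DirData) (j k : ℕ) : ℝ := nuP j D.α k

/-- A `j`-critical direction (Definition 2.4). -/
def IsCriticalDirection (d j : ℕ) (D : DirData) : Prop :=
  IsAdmissible d j D ∧
  (∀ k, j ≤ k → k ≤ d → (∃ n, D.p n k ≠ 0) →
    ∀ᶠ n : ℕ in atTop, D.lam d j k * Real.log n + D.mu d j n k + D.nu j k ≤ 0) ∧
  ∃ k, j ≤ k ∧ k ≤ d ∧
    ∀ᶠ n : ℕ in atTop, D.lam d j k * Real.log n + D.mu d j n k + D.nu j k = 0

/-- `k` is a critical dimension of the `j`-critical direction `D`. -/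
def IsCriticalDim (d j : ℕ) (D : DirData) (k : ℕ) : Prop :=
  j ≤ k ∧ k ≤ d ∧ (∃ n, D.p n k ≠ 0) ∧ D.lam d j k = 0 ∧
    (fun n => D.mu d j n k) =O[atTop] fun _ : ℕ => (1 : ℝ)

/-- The quantity `ℰ = exp(-c(j+1)) ∑_{k ∈ 𝒞} exp(μ̄_k + ν̄_k + c γ̄_k)`. -/
def Ecal (d j : ℕ) (D : DirData) (c : ℝ) (n : ℕ) : ℝ :=
  Real.exp (-(c * ((j : ℝ) + 1))) *
    ∑ k ∈ Finset.Icc j d,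
      if IsCriticalDim d j D k then Real.exp (D.mu d j n k + D.nu j k + c * D.γ k) else 0

/-- `q̄ = ∏_{k=j+1}^d (1 - p̄_k)^{binom(n-j-1, k-j)}`. -/
def qbar (d j : ℕ) (D : DirData) (n : ℕ) : ℝ :=
  ∏ k ∈ Finset.Icc (j + 1) d, (1 - D.p n k) ^ (Nat.choose (n - j - 1) (k - j))

end RSC

end

namespace RSC

open Function

theorem exists_perm_comp_eq_of_range_eq {α : Type*} {n : ℕ} {σ τ : Fin n → α}
    (hσ : Injective σ) (hτ : Injective τ) (h : Set.range τ = Set.range σ) :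
    ∃ e : Equiv.Perm (Fin n), τ = σ ∘ e :=
  ⟨(Equiv.ofInjective τ hτ).trans ((Equiv.setCongr h).trans (Equiv.ofInjective σ hσ).symm),
    funext fun i => by simp [Equiv.apply_ofInjective_symm]⟩

theorem image_comp_succAbove {α : Type*} [DecidableEq α] {n : ℕ} {σ : Fin (n + 1) → α}
    (hσ : Injective σ) (i : Fin (n + 1)) :
    univ.image (σ ∘ i.succAbove) = (univ.image σ).erase (σ i) := by
  rw [← image_image, Fin.image_succAbove_univ, compl_singleton, image_erase hσ]

section Flower

variable {α : Type*} [DecidableEq α] {j : ℕ} {K A : Finset α} {S : Set (Finset α)}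
  {u : α → α}

theorem exists_eq_insert_erase_of_subset_insert {B : Finset α} {v : α} (hvA : v ∉ A)
    (hBA : B ⊆ insert v A) (hvB : v ∈ B) (hcard : B.card = A.card) :
    ∃ u ∈ A, B = insert v (A.erase u) := by
  obtain ⟨u, huA, huB⟩ : ∃ u ∈ A, u ∉ B := by
    by_contra! hAB
    have := card_lt_card (Finset.ssubset_iff_subset_ne.2 ⟨hAB, fun h => hvA (h ▸ hvB)⟩)
    omega
  refine ⟨u, huA, eq_of_subset_of_card_le (fun x hx => ?_) ?_⟩
  · rcases mem_insert.1 (hBA hx) with rfl | hxA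
    · exact mem_insert_self x _
    · exact mem_insert_of_mem (mem_erase.2 ⟨fun h => huB (h ▸ hx), hxA⟩)
  · rw [card_insert_of_notMem (fun h => hvA (mem_of_mem_erase h)), card_erase_of_mem huA, hcard]
    have := card_pos.2 ⟨u, huA⟩
    omega

def NoLonelyFacet (K : Finset α) (S : Set (Finset α)) : Prop :=
  ∀ A ∈ S, ∀ v ∈ K, v ∉ A → ∃ B ∈ S, B ⊆ insert v A ∧ B ≠ A

def fan (K A : Finset α) (u : α → α) : Finset (Finset α) :=
  insert A ((K \ A).image fun v => insert v (A.erase (u v)))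

theorem NoLonelyFacet.exists_petal (hS : NoLonelyFacet K S)
    (hcard : ∀ A ∈ S, A.card = j + 1) (hA : A ∈ S) {v : α} (hvK : v ∈ K) (hvA : v ∉ A) :
    ∃ u ∈ A, insert v (A.erase u) ∈ S := by
  obtain ⟨B, hB, hBA, hne⟩ := hS A hA v hvK hvA
  have hvB : v ∈ B := by
    by_contra hvB
    exact hne (eq_of_subset_of_card_le ((subset_insert_iff_of_notMem hvB).1 hBA)
      (by rw [hcard A hA, hcard B hB]))
  obtain ⟨u, huA, rfl⟩ :=
    exists_eq_insert_erase_of_subset_insert hvA hBA hvB (by rw [hcard A hA, hcard B hB])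
  exact ⟨u, huA, hB⟩

theorem NoLonelyFacet.exists_fan_subset (hS : NoLonelyFacet K S)
    (hcard : ∀ A ∈ S, A.card = j + 1) (hA : A ∈ S) :
    ∃ u : α → α, (∀ v ∈ K \ A, u v ∈ A) ∧ ↑(fan K A u) ⊆ S := by
  choose! u hu hpetal using fun v (hv : v ∈ K \ A) =>
    hS.exists_petal hcard hA (mem_sdiff.1 hv).1 (mem_sdiff.1 hv).2
  refine ⟨u, hu, fun B hB => ?_⟩
  rcases mem_insert.1 hB with rfl | hB
  · exact hA
  · obtain ⟨v, hv, rfl⟩ := mem_image.1 hB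
    exact hpetal v hv

theorem card_fan (hAK : A ⊆ K) : (fan K A u).card = K.card - A.card + 1 := by
  have hA : ∀ v ∈ K \ A, v ∉ A := fun v hv => (mem_sdiff.1 hv).2
  rw [fan, card_insert_of_notMem, card_image_of_injOn, card_sdiff_of_subset hAK]
  · intro v hv w hw hvw
    simp only at hvw
    have hv' : v ∈ insert w (A.erase (u w)) := hvw ▸ mem_insert_self v _
    exact (mem_insert.1 hv').resolve_right fun h => hA v hv (mem_of_mem_erase h)
  · simp only [mem_image, not_exists, not_and]
    intro v hv h
    exact hA v hv (h ▸ mem_insert_self v _)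

theorem NoLonelyFacet.card_sub_le_ncard (hS : NoLonelyFacet K S) (hcard : ∀ A ∈ S, A.card = j + 1)
    (hSK : ∀ A ∈ S, A ⊆ K) (hne : S.Nonempty) : K.card - j ≤ S.ncard := by
  obtain ⟨A, hA⟩ := hne
  obtain ⟨u, -, hfan⟩ := hS.exists_fan_subset hcard hA
  have hfin : S.Finite := K.powerset.finite_toSet.subset fun B hB => mem_powerset.2 (hSK B hB)
  calc K.card - j ≤ (fan K A u).card := by rw [card_fan (hSK A hA), hcard A hA]; omega
    _ = (↑(fan K A u) : Set (Finset α)).ncard := (Set.ncard_coe_finset _).symm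
    _ ≤ S.ncard := Set.ncard_le_ncard hfan hfin

theorem NoLonelyFacet.biUnion_eq (hS : NoLonelyFacet K S) (hcard : ∀ A ∈ S, A.card = j + 1)
    (hSK : ∀ A ∈ S, A ⊆ K) (hne : S.Nonempty) : ⋃ A ∈ S, (A : Set α) = K := by
  obtain ⟨A, hA⟩ := hne
  refine subset_antisymm (Set.iUnion₂_subset fun B hB => coe_subset.2 (hSK B hB)) fun v hvK => ?_
  by_cases hvA : v ∈ A
  · exact Set.mem_biUnion hA hvA
  · obtain ⟨u, -, hP⟩ := hS.exists_petal hcard hA hvK hvA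
    exact Set.mem_biUnion hP (mem_insert_self v _)

theorem NoLonelyFacet.centre_eq_of_eq_fan (hS : NoLonelyFacet K S) (hSfan : S = ↑(fan K A u))
    (hu : ∀ v ∈ K \ A, u v ∈ A) {v w : α} (hv : v ∈ K \ A) (hw : w ∈ K \ A) : u v = u w := by
  by_contra hne
  have hvA := (mem_sdiff.1 hv).2
  obtain ⟨hwK, hwA⟩ := mem_sdiff.1 hw
  have hvw : w ≠ v := by rintro rfl; exact hne rfl
  set P := insert v (A.erase (u v))
  have hP : P ∈ S := hSfan ▸ mem_insert_of_mem (mem_image_of_mem _ hv)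
  have hwP : w ∉ P := by simp [P, hvw, hwA]
  obtain ⟨B, hB, hBP, hBne⟩ := hS P hP w hwK hwP
  -- `u v` lies in every member of the fan except `P`, but not in `insert w P`
  have huB : u v ∈ B := by
    rw [hSfan] at hB
    rcases mem_insert.1 hB with rfl | hB
    · exact hu v hv
    · obtain ⟨x, hx, rfl⟩ := mem_image.1 hB
      obtain rfl : x = w := by
        have hxA := (mem_sdiff.1 hx).2
        have hxv : x ≠ v := by rintro rfl; exact hBne rfl
        simpa [P, hxv, hxA] using hBP (mem_insert_self x _)
      exact mem_insert_of_mem (mem_erase.2 ⟨hne, hu v hv⟩)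
  have huv := hu v hv
  rcases mem_insert.1 (hBP huB) with h | h
  · exact hwA (h ▸ huv)
  rcases mem_insert.1 h with h | h
  · exact hvA (h ▸ huv)
  · exact notMem_erase _ _ h

theorem fan_eq_flower (hAK : A ⊆ K) {x : α} (hx : x ∈ A) (hu : ∀ v ∈ K \ A, u v = x) :
    (↑(fan K A u) : Set (Finset α)) = {P | ∃ w ∈ K, w ∉ A.erase x ∧ P = insert w (A.erase x)} := by
  ext P
  simp only [fan, coe_insert, coe_image, Set.mem_insert_iff, Set.mem_image, mem_coe]
  constructor
  · rintro (hP | ⟨v, hv, rfl⟩)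
    · exact ⟨x, hAK hx, notMem_erase x A, hP.trans (insert_erase hx).symm⟩
    · exact ⟨v, (mem_sdiff.1 hv).1, fun h => (mem_sdiff.1 hv).2 (mem_of_mem_erase h),
        by rw [hu v hv]⟩
  · rintro ⟨w, hwK, hwC, rfl⟩
    by_cases hwx : w = x
    · subst hwx
      exact Or.inl (insert_erase hx)
    · have hw : w ∈ K \ A := mem_sdiff.2 ⟨hwK, fun h => hwC (mem_erase.2 ⟨hwx, h⟩)⟩
      exact Or.inr ⟨w, hw, by rw [hu w hw]⟩

theorem NoLonelyFacet.eq_flower (hS : NoLonelyFacet K S) (hcard : ∀ A ∈ S, A.card = j + 1)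
    (hSK : ∀ A ∈ S, A ⊆ K) (hjK : j + 1 < K.card) (hncard : S.ncard = K.card - j) :
    ∃ C ⊆ K, C.card = j ∧ S = {P | ∃ w ∈ K, w ∉ C ∧ P = insert w C} := by
  obtain ⟨A, hA⟩ : S.Nonempty := Set.nonempty_of_ncard_ne_zero (by omega)
  obtain ⟨u, hu, hfan⟩ := hS.exists_fan_subset hcard hA
  have hAK := hSK A hA
  have hSfan : S = ↑(fan K A u) := by
    refine (Set.eq_of_subset_of_ncard_le hfan ?_ ?_).symm
    · rw [Set.ncard_coe_finset, card_fan hAK, hcard A hA, hncard]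
      omega
    · exact K.powerset.finite_toSet.subset fun B hB => mem_powerset.2 (hSK B hB)
  obtain ⟨v₀, hv₀⟩ : (K \ A).Nonempty := by
    rw [← card_pos, card_sdiff_of_subset hAK, hcard A hA]
    omega
  refine ⟨A.erase (u v₀), (erase_subset _ _).trans hAK,
    by rw [card_erase_of_mem (hu v₀ hv₀), hcard A hA, Nat.add_sub_cancel], ?_⟩
  rw [hSfan, fan_eq_flower hAK (hu v₀ hv₀) fun v hv => hS.centre_eq_of_eq_fan hSfan hu hv hv₀]

end Flower

section Cochain

variable {N m : ℕ} {R : Type} [AddCommGroup R] {G : Set (Finset (Fin N))}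
  {f : (Fin m → Fin N) → R}

theorem IsCochain.apply_comp_perm (hf : IsCochain G m f) (σ : Fin m → Fin N)
    (e : Equiv.Perm (Fin m)) : f (σ ∘ e) = Equiv.Perm.sign e • f σ := by
  induction e using Equiv.Perm.swap_induction_on generalizing σ with
  | one => simp
  | swap_mul e x y hxy ih =>
    rw [Equiv.Perm.coe_mul, ← Function.comp_assoc, ih, hf.2 σ x y hxy, Equiv.Perm.sign_mul,
      Equiv.Perm.sign_swap hxy, mul_smul, Units.neg_smul, one_smul, smul_neg]

theorem card_eq_of_mem_cochainSupport {A : Finset (Fin N)} (hA : A ∈ cochainSupport f) :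
    A.card = m := by
  obtain ⟨σ, hσ, rfl, -⟩ := hA
  rw [card_image_of_injective _ hσ, card_univ, Fintype.card_fin]

theorem IsCochain.apply_ne_zero_of_mem_cochainSupport (hf : IsCochain G m f)
    {A : Finset (Fin N)} (hA : A ∈ cochainSupport f) {τ : Fin m → Fin N} (hτ : Injective τ)
    (hτA : univ.image τ = A) : f τ ≠ 0 := by
  obtain ⟨σ, hσ, hσA, hfσ⟩ := hA
  have hrange : Set.range τ = Set.range σ := by
    simpa [← Set.image_univ] using
      congrArg ((↑) : Finset (Fin N) → Set (Fin N)) (hτA.trans hσA.symm)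
  obtain ⟨e, rfl⟩ := exists_perm_comp_eq_of_range_eq hσ hτ hrange
  rwa [hf.apply_comp_perm, smul_ne_zero_iff_ne]

end Cochain

section Cocycle

variable {N j : ℕ} {R : Type} [AddCommGroup R] {G : Set (Finset (Fin N))}
  {f : (Fin (j + 1) → Fin N) → R}

theorem IsCocycle.exists_ne_mem_cochainSupport (hf : IsCocycle G (j + 1) f)
    {L A : Finset (Fin N)} (hL : L ∈ G) (hLcard : L.card = j + 2)
    (hA : A ∈ cochainSupport f) (hAL : A ⊆ L) :
    ∃ B ∈ cochainSupport f, B ⊆ L ∧ B ≠ A := by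
  by_contra! hlone
  set σ : Fin (j + 2) → Fin N := ⇑(L.orderEmbOfFin hLcard)
  have hσ : Injective σ := (L.orderEmbOfFin hLcard).injective
  have hσL : univ.image σ = L := L.image_orderEmbOfFin_univ hLcard
  obtain ⟨x, hxA, rfl⟩ : ∃ x ∉ A, insert x A = L :=
    exists_eq_insert_iff.2 ⟨hAL, by rw [card_eq_of_mem_cochainSupport hA, hLcard]⟩
  obtain ⟨i₀, -, hi₀⟩ := mem_image.1 (hσL ▸ mem_insert_self x A)
  have hface : ∀ i, univ.image (σ ∘ i.succAbove) = (insert x A).erase (σ i) := fun i => by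
    rw [image_comp_succAbove hσ, hσL]
  have hface₀ : f (σ ∘ i₀.succAbove) ≠ 0 :=
    hf.1.apply_ne_zero_of_mem_cochainSupport hA (hσ.comp Fin.succAbove_right_injective)
      (by rw [hface, hi₀, erase_insert hxA])
  -- all other faces of `insert x A` lie outside the support, so `δf` sees `A` alone
  have hfaces : ∀ i ≠ i₀, f (σ ∘ i.succAbove) = 0 := by
    intro i hi
    by_contra hne
    have hB : (insert x A).erase (σ i) = A := hface i ▸
      hlone _ ⟨_, hσ.comp Fin.succAbove_right_injective, rfl, hne⟩
        (by rw [hface]; exact erase_subset _ _)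
    have hσiA : σ i ∈ A := (mem_insert.1 (hσL ▸ mem_image_of_mem σ (mem_univ i))).resolve_left
      (hi₀ ▸ hσ.ne hi)
    exact notMem_erase (σ i) (insert x A) (hB.symm ▸ hσiA)
  have hδ := hf.2 σ ⟨hσ, hσL ▸ hL⟩
  rw [delta, sum_eq_single i₀ (fun i _ hi => by rw [hfaces i hi, smul_zero])
    (fun h => absurd (mem_univ i₀) h)] at hδ
  exact hface₀ ((((isUnit_neg_one (α := ℤ)).pow _).smul_eq_zero).1 hδ)

theorem IsCocycle.noLonelyFacet (hG : IsComplex G) (hf : IsCocycle G (j + 1) f)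
    {K : Finset (Fin N)} (hK : K ∈ G) : NoLonelyFacet K {A ∈ cochainSupport f | A ⊆ K} := by
  rintro A ⟨hA, hAK⟩ v hvK hvA
  have hvAK : insert v A ⊆ K := insert_subset hvK hAK
  obtain ⟨B, hB, hBA, hne⟩ := hf.exists_ne_mem_cochainSupport
    (hG.2.2 K hK _ hvAK (insert_nonempty v A))
    (by rw [card_insert_of_notMem hvA, card_eq_of_mem_cochainSupport hA]) hA (subset_insert v A)
  exact ⟨B, ⟨hB, hBA.trans hvAK⟩, hBA, hne⟩

end Cocycle

theorem cocycle_support_structure_general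
    (d j N : ℕ)
    (R : Type) [AddCommGroup R]
    (G : Set (Finset (Fin N))) (hG : IsDComplex d G)
    (f : (Fin (j + 1) → Fin N) → R) (hf : IsCocycle G (j + 1) f)
    (k : ℕ) (hk1 : j + 1 ≤ k)
    (K : Finset (Fin N)) (hK : K ∈ G) (hKcard : K.card = k + 1) :
    (({A ∈ cochainSupport f | A ⊆ K} = (∅ : Set (Finset (Fin N)))) ∨
      (k - j + 1 ≤ {A ∈ cochainSupport f | A ⊆ K}.ncard ∧
        (⋃ A ∈ {A ∈ cochainSupport f | A ⊆ K}, (A : Set (Fin N))) = (K : Set (Fin N)))) ∧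
    ({A ∈ cochainSupport f | A ⊆ K}.ncard = k - j + 1 →
      ∃ C : Finset (Fin N), C ⊆ K ∧ C.card = j ∧
        {A ∈ cochainSupport f | A ⊆ K} = flower K C) := by
  set S := {A ∈ cochainSupport f | A ⊆ K}
  have hS : NoLonelyFacet K S := hf.noLonelyFacet hG.1 hK
  have hcard : ∀ A ∈ S, A.card = j + 1 := fun A hA => card_eq_of_mem_cochainSupport hA.1
  have hSK : ∀ A ∈ S, A ⊆ K := fun A hA => hA.2
  refine ⟨?_, fun hncard => hS.eq_flower hcard hSK (by omega) (by omega)⟩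
  rcases S.eq_empty_or_nonempty with hempty | hne
  · exact Or.inl hempty
  · have := hS.card_sub_le_ncard hcard hSK hne
    exact Or.inr ⟨by omega, hS.biUnion_eq hcard hSK hne⟩

/-- **Structure of supports of cocycles within a simplex** (Lemma 4.5). Let `f` be a
`j`-cocycle with support `S` in a `d`-complex `G`, and `K` a `k`-simplex of `G` with
`j+1 ≤ k ≤ d`. Then (i) `S_K = ∅`, or `|S_K| ≥ k-j+1` and `⋃ S_K = K`;
(ii) if `|S_K| = k-j+1` then `S_K` is a `j`-flower in `K`. -/
theorem cocycle_support_structure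
    (d j N : ℕ) (hd : 2 ≤ d) (hj : 1 ≤ j) (hjd : j ≤ d - 1)
    (R : Type) [AddCommGroup R] [Nontrivial R]
    (G : Set (Finset (Fin N))) (hG : IsDComplex d G)
    (f : (Fin (j + 1) → Fin N) → R) (hf : IsCocycle G (j + 1) f)
    (k : ℕ) (hk1 : j + 1 ≤ k) (hk2 : k ≤ d)
    (K : Finset (Fin N)) (hK : K ∈ G) (hKcard : K.card = k + 1) :
    (({A ∈ cochainSupport f | A ⊆ K} = (∅ : Set (Finset (Fin N)))) ∨
      (k - j + 1 ≤ {A ∈ cochainSupport f | A ⊆ K}.ncard ∧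
        (⋃ A ∈ {A ∈ cochainSupport f | A ⊆ K}, (A : Set (Fin N))) = (K : Set (Fin N)))) ∧
    ({A ∈ cochainSupport f | A ⊆ K}.ncard = k - j + 1 →
      ∃ C : Finset (Fin N), C ⊆ K ∧ C.card = j ∧
        {A ∈ cochainSupport f | A ⊆ K} = flower K C) :=
  cocycle_support_structure_general d j N R G hG f hf k hk1 K hK hKcard

end RSC
end

section
/- Characterization of cocycles supported in a flower. Let j ∈ {1,…,d−1}, let j ≤ k ≤ d, let M = (K,C) be a copy of M_{j,k} in a simplicial complex G on [n], and let f be a j-cochain of G whose support is contained in the flower F(K,C). Then: (i) f is a j-cocycle if and only if f = f_{M,r} for some r ∈ R; (ii) if moreover there exist w ∈ K∖C and a ∈ [n]∖K such that (K,C,w,a) is a copy of M̂_{j,k} in G, then f is a j-cocycle that is not a j-coboundary if and only if f = f_{M,r} for some r ∈ R∖{0_R}. -/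
open MeasureTheory Filter Finset Asymptotics
open scoped Classical

namespace RSC

/-- The canonical ordering of the petal `C ∪ {w}`: the `j` vertices of `C` in
increasing order, followed by `w`. -/
def canonOrd {N : ℕ} (j : ℕ) (C : Finset (Fin N)) (w : Fin N) : Fin (j + 1) → Fin N :=
  fun i => (C.sort (· ≤ ·)).getD (i : ℕ) w

/-- `f = f_{M,r}` for the copy `M = (K, C)` of `M_{j,k}`: the `j`-cochain taking the
value `r` on every petal of the flower `F(K,C)` in its canonical ordering and
vanishing on every `j`-simplex not in `F(K,C)`. -/
def IsFMr {N : ℕ} (G : Set (Finset (Fin N))) (j : ℕ) (K C : Finset (Fin N))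
    {R : Type} [AddCommGroup R] (f : (Fin (j + 1) → Fin N) → R) (r : R) : Prop :=
  IsCochain G (j + 1) f ∧
  (∀ σ : Fin (j + 1) → Fin N, Finset.image σ Finset.univ ∉ flower K C → f σ = 0) ∧
  ∀ w ∈ K, w ∉ C → f (canonOrd j C w) = r

/-! A cochain `f` supported in the flower `F(K,C)` is seen by `δ` only on `(j+1)`-sets
`C ∪ {w, w'}`, and there, in the canonical ordering, `δ f = ± (f(C,w') - f(C,w))`. Every such
set with `w, w' ∈ K` is a simplex (a face of `K`), and every simplex containing a petal lies in
`K`, so `f` is a cocycle exactly when it takes one value `r` on all canonically ordered petals.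
If `r = 0` then `f = 0`. If `r ≠ 0` and `(K,C,w,a)` is a copy of `M̂_{j,k}`, then `δ f = ∓ r` on
the shell `C ∪ {w, a}`, whereas `δ` of a coboundary vanishes on every `(j+1)`-tuple whose
facets are simplices, because `δ ∘ δ = 0`. -/

variable {N : ℕ} {R : Type} [AddCommGroup R]

section Coboundary

variable {m : ℕ}

theorem succAbove_comp_succAbove {i j : Fin (m + 1)} (h : i ≤ j) :
    j.succ.succAbove ∘ i.succAbove = i.castSucc.succAbove ∘ j.succAbove := by
  ext k
  simp only [Function.comp_apply, Fin.succAbove, Fin.lt_def, Fin.le_def] at h ⊢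
  split_ifs <;> simp at * <;> omega

/-- Pairs the index `(a, b)` of the double sum `δ (δ g)` with `(b, a - 1)` when `b < a`; the two
terms cancel by `succAbove_comp_succAbove`. -/
def deltaDeltaPair (p : Fin (m + 2) × Fin (m + 1)) : Fin (m + 2) × Fin (m + 1) :=
  if h : p.2.castSucc < p.1 then (p.2.castSucc, p.1.pred (Fin.ne_zero_of_lt h))
  else (p.2.succ, p.1.castPred (Fin.ne_last_of_lt ((not_lt.1 h).trans_lt p.2.castSucc_lt_succ)))

theorem deltaDeltaPair_involutive : Function.Involutive (deltaDeltaPair (m := m)) := by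
  rintro ⟨a, b⟩
  unfold deltaDeltaPair
  dsimp only
  split_ifs with h h' h' <;> simp only [Fin.lt_def, Fin.val_castSucc, Fin.val_succ, Fin.val_pred,
    Fin.coe_castPred, Prod.ext_iff, Fin.ext_iff] at h h' ⊢ <;> grind

theorem deltaDeltaPair_ne (p : Fin (m + 2) × Fin (m + 1)) : deltaDeltaPair p ≠ p := by
  unfold deltaDeltaPair
  split_ifs with h <;> simp only [Fin.lt_def, Fin.val_castSucc, Fin.val_succ, ne_eq, Prod.ext_iff,
    Fin.ext_iff] at h ⊢ <;> omega

theorem castSucc_lt_deltaDeltaPair {p : Fin (m + 2) × Fin (m + 1)} (h : ¬ p.2.castSucc < p.1) :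
    (deltaDeltaPair p).2.castSucc < (deltaDeltaPair p).1 := by
  simpa [deltaDeltaPair, h] using p.2.castSucc_lt_succ.trans_le' (not_lt.1 h)

theorem delta_delta (g : (Fin m → Fin N) → R) (σ : Fin (m + 2) → Fin N) :
    delta (delta g) σ = 0 := by
  simp only [delta, Finset.smul_sum, smul_smul, ← pow_add, ← Finset.sum_product']
  set T : Fin (m + 2) × Fin (m + 1) → R :=
    fun p => (-1 : ℤ) ^ ((p.1 : ℕ) + p.2) • g ((σ ∘ p.1.succAbove) ∘ p.2.succAbove)
  have cancel : ∀ p, p.2.castSucc < p.1 → T p + T (deltaDeltaPair p) = 0 := by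
    rintro ⟨a, b⟩ h
    obtain ⟨c, rfl⟩ := Fin.exists_succ_eq.2 (Fin.ne_zero_of_lt h)
    have hbc : b ≤ c := Fin.castSucc_lt_succ_iff.1 h
    simp only [T, deltaDeltaPair, dif_pos h, Fin.pred_succ, Function.comp_assoc,
      succAbove_comp_succAbove hbc, Fin.val_succ, Fin.val_castSucc, ← add_smul]
    rw [show (c : ℕ) + 1 + b = (b + c) + 1 by ring, pow_succ]
    simp
  refine Finset.sum_ninvolution deltaDeltaPair (fun p => ?_) (fun p _ => deltaDeltaPair_ne p)
    (fun _ => Finset.mem_univ _) deltaDeltaPair_involutive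
  by_cases h : p.2.castSucc < p.1
  · exact cancel p h
  · rw [add_comm]
    simpa only [deltaDeltaPair_involutive p] using cancel _ (castSucc_lt_deltaDeltaPair h)

theorem IsCobound.delta_eq_zero {G : Set (Finset (Fin N))} {f : (Fin (m + 1) → Fin N) → R}
    (hf : IsCobound G m f) {σ : Fin (m + 2) → Fin N}
    (hσ : ∀ i : Fin (m + 2), OrdSimp G (σ ∘ i.succAbove)) : delta f σ = 0 := by
  obtain ⟨g, -, hfg⟩ := hf
  rw [← delta_delta g σ]
  exact Finset.sum_congr rfl fun i _ => by rw [hfg _ (hσ i)]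

theorem isCobound_zero (G : Set (Finset (Fin N))) (m : ℕ) :
    IsCobound G m (0 : (Fin (m + 1) → Fin N) → R) :=
  ⟨0, ⟨fun _ _ => rfl, fun _ _ _ _ => neg_zero.symm⟩, fun _ _ => by simp [delta]⟩

end Coboundary

section Alternating

variable {m : ℕ}

theorem swap_comp_succAbove_castSucc (i : Fin m) :
    Equiv.swap i.castSucc i.succ ∘ i.castSucc.succAbove = i.succ.succAbove := by
  ext x
  simp only [Function.comp_apply, Equiv.swap_apply_def, Fin.succAbove, Fin.ext_iff, Fin.lt_def]
  split_ifs <;> simp_all <;> omega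

theorem swap_comp_succAbove_succ (i : Fin m) :
    Equiv.swap i.castSucc i.succ ∘ i.succ.succAbove = i.castSucc.succAbove := by
  rw [← swap_comp_succAbove_castSucc, ← Function.comp_assoc, ← Equiv.coe_trans,
    Equiv.swap_swap, Equiv.coe_refl, Function.id_comp]

def IsAlternating (f : (Fin m → Fin N) → R) : Prop :=
  ∀ (σ : Fin m → Fin N) (a b : Fin m), a ≠ b → f (σ ∘ Equiv.swap a b) = - f σ

variable {f : (Fin m → Fin N) → R}

theorem IsAlternating.comp_perm (hf : IsAlternating f) (σ : Fin m → Fin N)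
    (π : Equiv.Perm (Fin m)) : f (σ ∘ π) = (Equiv.Perm.sign π : ℤ) • f σ := by
  induction π using Equiv.Perm.swap_induction_on' with
  | one => simp
  | mul_swap π a b hab ih =>
    rw [Equiv.Perm.coe_mul, ← Function.comp_assoc, hf _ _ _ hab, ih, map_mul,
      Equiv.Perm.sign_swap hab]
    simp

theorem IsAlternating.delta_comp_swap (hf : IsAlternating f) (σ : Fin (m + 1) → Fin N)
    (i : Fin m) : delta f (σ ∘ Equiv.swap i.castSucc i.succ) = - delta f σ := by
  set s := Equiv.swap i.castSucc i.succ
  have term : ∀ l, (-1 : ℤ) ^ (s l : ℕ) • f ((σ ∘ s) ∘ (s l).succAbove) =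
      - ((-1 : ℤ) ^ (l : ℕ) • f (σ ∘ l.succAbove)) := by
    intro l
    by_cases hl : l = i.castSucc ∨ l = i.succ
    · rcases hl with rfl | rfl
      · simp [s, Function.comp_assoc, swap_comp_succAbove_succ, pow_succ]
      · simp [s, Function.comp_assoc, swap_comp_succAbove_castSucc, pow_succ]
    · rw [not_or] at hl
      obtain ⟨a, ha⟩ := Fin.exists_succAbove_eq (Ne.symm hl.1)
      obtain ⟨b, hb⟩ := Fin.exists_succAbove_eq (Ne.symm hl.2)
      have hab : a ≠ b := by rintro rfl; exact i.castSucc_lt_succ.ne (ha.symm.trans hb)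
      have hcomm : s ∘ l.succAbove = l.succAbove ∘ Equiv.swap a b := by
        ext x
        simp [s, Fin.succAbove_right_injective.map_swap, ha, hb]
      rw [Equiv.swap_apply_of_ne_of_ne hl.1 hl.2, Function.comp_assoc, hcomm,
        ← Function.comp_assoc, hf _ _ _ hab, smul_neg]
  calc delta f (σ ∘ s) = ∑ l, (-1 : ℤ) ^ (s l : ℕ) • f ((σ ∘ s) ∘ (s l).succAbove) :=
        (Equiv.sum_comp s _).symm
    _ = - delta f σ := by simp only [term, Finset.sum_neg_distrib]; rfl

theorem IsAlternating.delta_comp_perm (hf : IsAlternating f) (σ : Fin (m + 1) → Fin N)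
    (π : Equiv.Perm (Fin (m + 1))) :
    delta f (σ ∘ π) = (Equiv.Perm.sign π : ℤ) • delta f σ := by
  have hπ : π ∈ Submonoid.closure (Set.range fun i : Fin m ↦ Equiv.swap i.castSucc i.succ) := by
    rw [Equiv.Perm.mclosure_swap_castSucc_succ]; trivial
  induction hπ using Submonoid.closure_induction generalizing σ with
  | mem _ hx =>
    obtain ⟨i, rfl⟩ := hx
    rw [hf.delta_comp_swap, Equiv.Perm.sign_swap i.castSucc_lt_succ.ne]
    simp
  | one => simp
  | mul x y _ _ ihx ihy =>
    rw [Equiv.Perm.coe_mul, ← Function.comp_assoc, ihy, ihx, map_mul, smul_smul]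
    push_cast; ring_nf

end Alternating

section Tuples

variable {α : Type} [DecidableEq α] {m : ℕ}

theorem injective_of_card_image {σ : Fin m → α} (h : (Finset.image σ Finset.univ).card = m) :
    Function.Injective σ := by
  rw [← Set.injOn_univ, ← Finset.coe_univ, ← Finset.card_image_iff, h, Finset.card_univ,
    Fintype.card_fin]

theorem exists_perm_of_image_eq {σ τ : Fin m → α} (hτ : Function.Injective τ)
    (h : Finset.image σ Finset.univ = Finset.image τ Finset.univ) :
    ∃ π : Equiv.Perm (Fin m), σ = τ ∘ π := by
  have hσ : Function.Injective σ := injective_of_card_image <| by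
    rw [h, Finset.card_image_of_injective _ hτ, Finset.card_univ, Fintype.card_fin]
  have hrange : Set.range σ = Set.range τ := by
    simpa [Set.image_univ] using congrArg (fun s : Finset α => (s : Set α)) h
  refine ⟨(Equiv.ofInjective σ hσ).trans ((Equiv.setCongr hrange).trans
    (Equiv.ofInjective τ hτ).symm), funext fun x => ?_⟩
  simp [Equiv.apply_ofInjective_symm]

theorem image_comp_subset {β : Type} [Fintype β] (σ : Fin m → α) (g : β → Fin m) :
    Finset.image (σ ∘ g) Finset.univ ⊆ Finset.image σ Finset.univ := by
  rw [← Finset.image_image]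
  exact Finset.image_subset_image (Finset.subset_univ _)

theorem apply_notMem_image_comp_succAbove {σ : Fin (m + 1) → α} (hσ : Function.Injective σ)
    (i : Fin (m + 1)) : σ i ∉ Finset.image (σ ∘ i.succAbove) Finset.univ := by
  simp [hσ.eq_iff, Fin.succAbove_ne]

end Tuples

section CanonicalOrder

variable {j : ℕ} {C : Finset (Fin N)} {w w' : Fin N}

theorem canonOrd_castSucc_mem (hC : C.card = j) (i : Fin j) : canonOrd j C w i.castSucc ∈ C := by
  have hi : (i : ℕ) < (C.sort (· ≤ ·)).length := by simp [hC]
  show (C.sort (· ≤ ·)).getD i w ∈ C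
  rw [List.getD_eq_getElem _ _ hi, ← Finset.mem_sort (· ≤ ·)]
  exact List.getElem_mem hi

theorem canonOrd_castSucc (hC : C.card = j) (i : Fin j) :
    canonOrd j C w i.castSucc = canonOrd j C w' i.castSucc := by
  have hi : (i : ℕ) < (C.sort (· ≤ ·)).length := by simp [hC]
  show (C.sort (· ≤ ·)).getD i w = (C.sort (· ≤ ·)).getD i w'
  rw [List.getD_eq_getElem _ _ hi, List.getD_eq_getElem _ _ hi]

theorem canonOrd_last (hC : C.card = j) : canonOrd j C w (Fin.last j) = w := by
  simp [canonOrd, hC]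

theorem image_canonOrd (hC : C.card = j) :
    Finset.image (canonOrd j C w) Finset.univ = insert w C := by
  ext v
  simp only [Finset.mem_image, Finset.mem_univ, true_and, Finset.mem_insert, Fin.exists_fin_succ',
    canonOrd_last hC]
  constructor
  · rintro (⟨i, rfl⟩ | rfl)
    exacts [Or.inr (canonOrd_castSucc_mem hC i), Or.inl rfl]
  · rintro (rfl | hv)
    · exact Or.inr rfl
    · obtain ⟨n, hn, rfl⟩ := List.mem_iff_getElem.1 ((Finset.mem_sort (· ≤ ·)).2 hv)
      exact Or.inl ⟨⟨n, by simpa [hC] using hn⟩, List.getD_eq_getElem _ _ hn⟩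

theorem canonOrd_injective (hC : C.card = j) (hw : w ∉ C) : Function.Injective (canonOrd j C w) :=
  injective_of_card_image <| by rw [image_canonOrd hC, Finset.card_insert_of_notMem hw, hC]

def canonOrdPair (j : ℕ) (C : Finset (Fin N)) (w w' : Fin N) : Fin (j + 2) → Fin N :=
  Fin.snoc (canonOrd j C w) w'

theorem image_canonOrdPair (hC : C.card = j) :
    Finset.image (canonOrdPair j C w w') Finset.univ = insert w' (insert w C) := by
  rw [← image_canonOrd hC]
  ext v
  simp only [Finset.mem_image, Finset.mem_univ, true_and, Finset.mem_insert, Fin.exists_fin_succ',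
    canonOrdPair, Fin.snoc_castSucc, Fin.snoc_last]
  tauto

theorem canonOrdPair_injective (hC : C.card = j) (hw : w ∉ C) (hw' : w' ∉ C) (hww' : w ≠ w') :
    Function.Injective (canonOrdPair j C w w') :=
  injective_of_card_image <| by
    rw [image_canonOrdPair hC, Finset.card_insert_of_notMem (by simp [hww'.symm, hw']),
      Finset.card_insert_of_notMem hw, hC]

theorem canonOrdPair_comp_succAbove_last :
    canonOrdPair j C w w' ∘ (Fin.last (j + 1)).succAbove = canonOrd j C w := by
  simp [canonOrdPair, Fin.snoc_comp_castSucc]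

theorem canonOrdPair_comp_succAbove_castSucc_last (hC : C.card = j) :
    canonOrdPair j C w w' ∘ (Fin.last j).castSucc.succAbove = canonOrd j C w' := by
  ext1 x
  induction x using Fin.lastCases with
  | last => simp [canonOrdPair, canonOrd_last hC]
  | cast i =>
    simp [canonOrdPair, Fin.succAbove_castSucc_of_lt _ _ (Fin.castSucc_lt_last i),
      canonOrd_castSucc hC i (w' := w')]

/-- Only the two facets containing `C` contribute. -/
theorem delta_canonOrdPair (hC : C.card = j) (hw : w ∉ C) (hw' : w' ∉ C) (hww' : w ≠ w')
    {f : (Fin (j + 1) → Fin N) → R}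
    (hf : ∀ σ, ¬ C ⊆ Finset.image σ Finset.univ → f σ = 0) :
    delta f (canonOrdPair j C w w') =
      (-1 : ℤ) ^ j • (f (canonOrd j C w') - f (canonOrd j C w)) := by
  have hfacets : ∀ i : Fin j, f (canonOrdPair j C w w' ∘ i.castSucc.castSucc.succAbove) = 0 := by
    intro i
    refine hf _ fun hsub => apply_notMem_image_comp_succAbove
      (canonOrdPair_injective hC hw hw' hww') _ (hsub ?_)
    simpa [canonOrdPair] using canonOrd_castSucc_mem hC i (w := w)
  rw [delta, Fin.sum_univ_castSucc, Fin.sum_univ_castSucc]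
  simp only [hfacets, smul_zero, Finset.sum_const_zero, zero_add,
    canonOrdPair_comp_succAbove_last, canonOrdPair_comp_succAbove_castSucc_last hC,
    Fin.val_castSucc, Fin.val_last, pow_succ]
  rw [mul_neg_one, neg_smul, smul_sub, sub_eq_add_neg]

end CanonicalOrder

section Flower

theorem IsCochain.eq_zero_of_support_subset {G : Set (Finset (Fin N))} {m : ℕ}
    {f : (Fin m → Fin N) → R} {S : Set (Finset (Fin N))} (hf : IsCochain G m f)
    (hsupp : cochainSupport f ⊆ S) {σ : Fin m → Fin N} (hσ : Finset.image σ Finset.univ ∉ S) :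
    f σ = 0 := by
  by_contra hne
  have hinj : Function.Injective σ := by_contra fun h => hne (hf.1 σ fun hs => h hs.1)
  exact hσ (hsupp ⟨σ, hinj, rfl, hne⟩)

theorem exists_eq_insert_insert {s C : Finset (Fin N)} (hCs : C ⊆ s)
    (hs : s.card = C.card + 2) :
    ∃ w w', w ∉ C ∧ w' ∉ C ∧ w ≠ w' ∧ s = insert w' (insert w C) := by
  obtain ⟨w, w', hww', hsd⟩ :=
    Finset.card_eq_two.1 (by rw [Finset.card_sdiff_of_subset hCs, hs]; omega)
  have hw := Finset.mem_sdiff.1 (hsd ▸ Finset.mem_insert_self w {w'})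
  have hw' := Finset.mem_sdiff.1 (hsd ▸ Finset.mem_insert_of_mem (Finset.mem_singleton_self w'))
  refine ⟨w, w', hw.2, hw'.2, hww', ?_⟩
  rw [← Finset.sdiff_union_of_subset hCs, hsd]
  ext v
  simp only [Finset.mem_union, Finset.mem_insert, Finset.mem_singleton]
  tauto

variable {j k : ℕ} {G : Set (Finset (Fin N))} {K C : Finset (Fin N)}
  {f : (Fin (j + 1) → Fin N) → R} {r : R}

theorem subset_of_mem_flower {P : Finset (Fin N)} (hP : P ∈ flower K C) : C ⊆ P := by
  obtain ⟨w, -, -, rfl⟩ := hP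
  exact Finset.subset_insert w C

theorem eq_zero_of_centre_not_subset
    (hvan : ∀ σ, Finset.image σ Finset.univ ∉ flower K C → f σ = 0) (σ : Fin (j + 1) → Fin N)
    (hσ : ¬ C ⊆ Finset.image σ Finset.univ) : f σ = 0 :=
  hvan σ fun hP => hσ (subset_of_mem_flower hP)

theorem exists_isFMr_of_isCocycle (hG : IsComplex G) (hM : IsCopyM G j k K C)
    (hf : IsCocycle G (j + 1) f)
    (hvan : ∀ σ, Finset.image σ Finset.univ ∉ flower K C → f σ = 0) :
    ∃ r, IsFMr G j K C f r := by
  obtain ⟨hK, -, hCK, hC, -⟩ := hM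
  have hconst : ∀ w ∈ K \ C, ∀ w' ∈ K \ C, f (canonOrd j C w) = f (canonOrd j C w') := by
    intro w hw w' hw'
    rw [Finset.mem_sdiff] at hw hw'
    obtain rfl | hww' := eq_or_ne w w'
    · rfl
    have hsimplex : OrdSimp G (canonOrdPair j C w w') := by
      refine ⟨canonOrdPair_injective hC hw.2 hw'.2 hww', hG.2.2 K hK _ ?_ (by simp)⟩
      rw [image_canonOrdPair hC]
      exact Finset.insert_subset hw'.1 (Finset.insert_subset hw.1 hCK)
    have h := hf.2 _ hsimplex
    rw [delta_canonOrdPair hC hw.2 hw'.2 hww' (eq_zero_of_centre_not_subset hvan),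
      (isUnit_neg_one.pow j).smul_eq_zero, sub_eq_zero] at h
    exact h.symm
  obtain hKC | ⟨w₀, hw₀⟩ := (K \ C).eq_empty_or_nonempty
  · exact ⟨0, hf.1, hvan, fun w hw hwC =>
      absurd (hKC ▸ Finset.mem_sdiff.2 ⟨hw, hwC⟩) (Finset.notMem_empty w)⟩
  · exact ⟨f (canonOrd j C w₀), hf.1, hvan, fun w hw hwC =>
      hconst w (Finset.mem_sdiff.2 ⟨hw, hwC⟩) w₀ hw₀⟩

theorem isCocycle_of_isFMr (hM : IsCopyM G j k K C) (hr : IsFMr G j K C f r) :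
    IsCocycle G (j + 1) f := by
  obtain ⟨-, -, -, hC, hloc, -⟩ := hM
  refine ⟨hr.1, fun σ hσ => ?_⟩
  by_cases hpetal : ∃ u ∈ K, u ∉ C ∧ insert u C ⊆ Finset.image σ Finset.univ
  · have hσK := hloc _ hσ.2 hpetal
    obtain ⟨u, -, -, hu⟩ := hpetal
    obtain ⟨w, w', hw, hw', hww', himage⟩ := exists_eq_insert_insert
      ((Finset.subset_insert u C).trans hu)
      (by rw [Finset.card_image_of_injective _ hσ.1, Finset.card_univ, Fintype.card_fin, hC])
    obtain ⟨π, rfl⟩ := exists_perm_of_image_eq (canonOrdPair_injective hC hw hw' hww')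
      (himage.trans (image_canonOrdPair hC).symm)
    have hwK : w ∈ K := hσK (himage ▸ Finset.mem_insert_of_mem (Finset.mem_insert_self w C))
    have hw'K : w' ∈ K := hσK (himage ▸ Finset.mem_insert_self w' _)
    rw [IsAlternating.delta_comp_perm hr.1.2,
      delta_canonOrdPair hC hw hw' hww' (eq_zero_of_centre_not_subset hr.2.1),
      hr.2.2 w hwK hw, hr.2.2 w' hw'K hw', sub_self, smul_zero, smul_zero]
  · refine Finset.sum_eq_zero fun i _ => ?_
    rw [hr.2.1 _ fun ⟨u, huK, huC, hP⟩ => hpetal ⟨u, huK, huC, hP ▸ image_comp_subset σ _⟩,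
      smul_zero]

theorem IsFMr.eq_zero (hC : C.card = j) (hr : IsFMr G j K C f 0) : f = 0 := by
  funext σ
  by_cases hσ : Finset.image σ Finset.univ ∈ flower K C
  · obtain ⟨u, huK, huC, hP⟩ := hσ
    obtain ⟨π, rfl⟩ := exists_perm_of_image_eq (canonOrd_injective hC huC)
      (hP.trans (image_canonOrd hC).symm)
    rw [IsAlternating.comp_perm hr.1.2, hr.2.2 u huK huC, smul_zero, Pi.zero_apply]
  · exact hr.2.1 σ hσ

theorem not_isCobound_of_isFMr {w a : Fin N} (hr : IsFMr G j K C f r) (hr0 : r ≠ 0)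
    (hhat : IsCopyMhat G j k K C w a) : ¬ IsCobound G j f := by
  obtain ⟨⟨-, -, hCK, hC, -⟩, hwK, hwC, haK, hshell, -⟩ := hhat
  have haC : a ∉ C := fun h => haK (hCK h)
  have hwa : w ≠ a := fun h => haK (h ▸ hwK)
  have hinj := canonOrdPair_injective hC hwC haC hwa
  have hfa : f (canonOrd j C a) = 0 := by
    refine hr.2.1 _ fun ⟨u, huK, huC, hP⟩ => ?_
    rw [image_canonOrd hC] at hP
    rcases Finset.mem_insert.1 (hP ▸ Finset.mem_insert_self a C) with rfl | h
    exacts [haK huK, haC h]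
  have hfacets : ∀ i : Fin (j + 2), OrdSimp G (canonOrdPair j C w a ∘ i.succAbove) := by
    intro i
    have hinj_i := hinj.comp (Fin.succAbove_right_injective (p := i))
    refine ⟨hinj_i, hshell.2 _ (image_canonOrdPair hC ▸ image_comp_subset _ _) ?_⟩
    rw [Finset.card_image_of_injective _ hinj_i, Finset.card_univ, Fintype.card_fin]
  intro hcob
  have h := hcob.delta_eq_zero hfacets
  rw [delta_canonOrdPair hC hwC haC hwa (eq_zero_of_centre_not_subset hr.2.1),
    hfa, hr.2.2 w hwK hwC, (isUnit_neg_one.pow j).smul_eq_zero, zero_sub, neg_eq_zero] at h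
  exact hr0 h

end Flower

theorem cocycles_supported_in_flower_general
    (j N : ℕ)
    (k : ℕ)
    (R : Type) [AddCommGroup R]
    (G : Set (Finset (Fin N))) (hG : IsComplex G)
    (K C : Finset (Fin N)) (hM : IsCopyM G j k K C)
    (f : (Fin (j + 1) → Fin N) → R) (hf : IsCochain G (j + 1) f)
    (hsupp : cochainSupport f ⊆ flower K C) :
    (IsCocycle G (j + 1) f ↔ ∃ r : R, IsFMr G j K C f r) ∧
    ((∃ w a, IsCopyMhat G j k K C w a) →
      ((IsCocycle G (j + 1) f ∧ ¬ IsCobound G j f) ↔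
        ∃ r : R, r ≠ 0 ∧ IsFMr G j K C f r)) := by
  have hvan : ∀ σ, Finset.image σ Finset.univ ∉ flower K C → f σ = 0 :=
    fun _ hσ => hf.eq_zero_of_support_subset hsupp hσ
  have cocycle_iff : IsCocycle G (j + 1) f ↔ ∃ r : R, IsFMr G j K C f r :=
    ⟨fun hcoc => exists_isFMr_of_isCocycle hG hM hcoc hvan,
      fun ⟨_, hr⟩ => isCocycle_of_isFMr hM hr⟩
  refine ⟨cocycle_iff, fun ⟨w, a, hhat⟩ => ⟨fun ⟨hcoc, hncob⟩ => ?_, fun ⟨r, hr0, hr⟩ =>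
    ⟨cocycle_iff.2 ⟨r, hr⟩, not_isCobound_of_isFMr hr hr0 hhat⟩⟩⟩
  obtain ⟨r, hr⟩ := cocycle_iff.1 hcoc
  refine ⟨r, fun hr0 => hncob ?_, hr⟩
  subst hr0
  rw [hr.eq_zero hM.2.2.2.1]
  exact isCobound_zero G j

/-- **Characterisation of cocycles supported in a flower** (Proposition 4.10). Let
`M = (K,C)` be a copy of `M_{j,k}` and `f` a `j`-cochain with support contained in
the flower `F(K,C)`. Then (i) `f` is a `j`-cocycle iff `f = f_{M,r}` for some `r ∈ R`;
(ii) if moreover `(K,C,w,a)` is a copy of `M̂_{j,k}` for some `w, a`, then `f` is a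
`j`-cocycle that is not a `j`-coboundary iff `f = f_{M,r}` for some `r ≠ 0`. -/
theorem cocycles_supported_in_flower
    (d j N : ℕ) (hd : 2 ≤ d) (hj : 1 ≤ j) (hjd : j ≤ d - 1)
    (k : ℕ) (hk1 : j ≤ k) (hk2 : k ≤ d)
    (R : Type) [AddCommGroup R] [Nontrivial R]
    (G : Set (Finset (Fin N))) (hG : IsComplex G)
    (K C : Finset (Fin N)) (hM : IsCopyM G j k K C)
    (f : (Fin (j + 1) → Fin N) → R) (hf : IsCochain G (j + 1) f)
    (hsupp : cochainSupport f ⊆ flower K C) :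
    (IsCocycle G (j + 1) f ↔ ∃ r : R, IsFMr G j K C f r) ∧
    ((∃ w a, IsCopyMhat G j k K C w a) →
      ((IsCocycle G (j + 1) f ∧ ¬ IsCobound G j f) ↔
        ∃ r : R, r ≠ 0 ∧ IsFMr G j K C f r)) :=
  cocycles_supported_in_flower_general j N k R G hG K C hM f hf hsupp

end RSC
end

section
/- Minimal supports are traversable. Let j ∈ {1,…,d−1} and let G be a d-complex. Suppose N_G ≠ ∅ and let f ∈ N_G be an element whose support has minimum cardinality among the supports of all elements of N_G. Then supp(f) is traversable in G. -/
open MeasureTheory Filter Finset Asymptotics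
open scoped Classical

namespace RSC

/-- A collection `S` of `j`-simplices is traversable in a `d`-complex `G`: any two of
its members are joined by a sequence of members of `S` in which every two consecutive
ones lie in a common simplex of `G` of dimension between `j+1` and `d`. -/
def Traversable {N : ℕ} (d j : ℕ) (G S : Set (Finset (Fin N))) : Prop :=
  ∀ J ∈ S, ∀ J' ∈ S, ∃ m : ℕ, ∃ Jseq : Fin (m + 1) → Finset (Fin N),
    ∃ Kseq : Fin m → Finset (Fin N),
      Jseq 0 = J ∧ Jseq (Fin.last m) = J' ∧ (∀ i, Jseq i ∈ S) ∧
      ∀ i : Fin m, Kseq i ∈ G ∧ j + 2 ≤ (Kseq i).card ∧ (Kseq i).card ≤ d + 1 ∧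
        Jseq i.castSucc ∪ Jseq i.succ ⊆ Kseq i

/-- A `j`-cocycle arises from a copy `(K,C)` of `M_{j,k}` if its support is the
flower `F(K,C)`. -/
def ArisesFrom {N : ℕ} (d j : ℕ) (G : Set (Finset (Fin N))) {R : Type} [AddCommGroup R]
    (f : (Fin (j + 1) → Fin N) → R) : Prop :=
  IsCocycle G (j + 1) f ∧ ∃ k, j ≤ k ∧ k ≤ d ∧ ∃ K C : Finset (Fin N),
    IsCopyM G j k K C ∧ cochainSupport f = flower K C

/-- A `j`-cocycle is generated by copies of `M_{j,k}`: it differs by a `j`-coboundary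
from a finite sum of `j`-cocycles arising from copies of `M_{j,k}`. -/
def GeneratedByCopies {N : ℕ} (d j : ℕ) (G : Set (Finset (Fin N)))
    {R : Type} [AddCommGroup R] (f : (Fin (j + 1) → Fin N) → R) : Prop :=
  ∃ (m : ℕ) (fs : Fin m → (Fin (j + 1) → Fin N) → R),
    (∀ i, ArisesFrom d j G (fs i)) ∧ IsCobound G j (f - ∑ i, fs i)


section AuxLemmas

variable {N : ℕ} {R : Type} [AddCommGroup R]

lemma aux_delta_add {m : ℕ} (u v : (Fin m → Fin N) → R) :
    delta (u + v) = delta u + delta v := by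
  funext σ
  simp [delta, smul_add, Finset.sum_add_distrib]

lemma aux_isCochain_add {G : Set (Finset (Fin N))} {m : ℕ} {u v : (Fin m → Fin N) → R}
    (hu : IsCochain G m u) (hv : IsCochain G m v) : IsCochain G m (u + v) := by
  refine ⟨fun σ h => ?_, fun σ a b hab => ?_⟩
  · simp [hu.1 σ h, hv.1 σ h]
  · simp only [Pi.add_apply, hu.2 σ a b hab, hv.2 σ a b hab]
    abel

lemma aux_isCochain_sub {G : Set (Finset (Fin N))} {m : ℕ} {u v : (Fin m → Fin N) → R}
    (hu : IsCochain G m u) (hv : IsCochain G m v) : IsCochain G m (u - v) := by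
  refine ⟨fun σ h => ?_, fun σ a b hab => ?_⟩
  · simp [hu.1 σ h, hv.1 σ h]
  · simp only [Pi.sub_apply, hu.2 σ a b hab, hv.2 σ a b hab]
    abel

lemma aux_delta_sub {m : ℕ} (u v : (Fin m → Fin N) → R) :
    delta (u - v) = delta u - delta v := by
  funext σ
  simp [delta, smul_sub, Finset.sum_sub_distrib]

lemma aux_isCocycle_sub {G : Set (Finset (Fin N))} {m : ℕ} {u v : (Fin m → Fin N) → R}
    (hu : IsCocycle G m u) (hv : IsCocycle G m v) : IsCocycle G m (u - v) := by
  refine ⟨aux_isCochain_sub hu.1 hv.1, fun σ hσ => ?_⟩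
  rw [aux_delta_sub, Pi.sub_apply, hu.2 σ hσ, hv.2 σ hσ, sub_zero]

lemma aux_isCobound_add {G : Set (Finset (Fin N))} {m : ℕ}
    {u v : (Fin (m + 1) → Fin N) → R}
    (hu : IsCobound G m u) (hv : IsCobound G m v) : IsCobound G m (u + v) := by
  obtain ⟨a, ha, hua⟩ := hu
  obtain ⟨b, hb, hvb⟩ := hv
  refine ⟨a + b, aux_isCochain_add ha hb, fun σ hσ => ?_⟩
  rw [Pi.add_apply, hua σ hσ, hvb σ hσ, aux_delta_add, Pi.add_apply]

lemma aux_generated_add {d j : ℕ} {G : Set (Finset (Fin N))}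
    {u v : (Fin (j + 1) → Fin N) → R}
    (hu : GeneratedByCopies d j G u) (hv : GeneratedByCopies d j G v) :
    GeneratedByCopies d j G (u + v) := by
  obtain ⟨m1, fs, hfs, hcb1⟩ := hu
  obtain ⟨m2, gs, hgs, hcb2⟩ := hv
  refine ⟨m1 + m2, Fin.append fs gs, ?_, ?_⟩
  · intro i
    refine Fin.addCases (fun i => ?_) (fun i => ?_) i
    · rw [Fin.append_left]; exact hfs i
    · rw [Fin.append_right]; exact hgs i
  · have hsum : (∑ i : Fin (m1 + m2), Fin.append fs gs i) = (∑ i, fs i) + (∑ i, gs i) := by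
      rw [Fin.sum_univ_add]
      simp [Fin.append_left, Fin.append_right]
    have heq : u + v - ∑ i, Fin.append fs gs i = (u - ∑ i, fs i) + (v - ∑ i, gs i) := by
      rw [hsum]; abel
    rw [heq]
    exact aux_isCobound_add hcb1 hcb2

lemma aux_seq_of_reach (d j : ℕ) (G S : Set (Finset (Fin N)))
    (Step : Finset (Fin N) → Finset (Fin N) → Prop)
    (hStep : ∀ A B, Step A B →
      B ∈ S ∧ ∃ K ∈ G, j + 2 ≤ K.card ∧ K.card ≤ d + 1 ∧ A ∪ B ⊆ K)
    {J J' : Finset (Fin N)} (hJ : J ∈ S) (h : Relation.ReflTransGen Step J J') :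
    ∃ m : ℕ, ∃ Jseq : Fin (m + 1) → Finset (Fin N), ∃ Kseq : Fin m → Finset (Fin N),
      Jseq 0 = J ∧ Jseq (Fin.last m) = J' ∧ (∀ i, Jseq i ∈ S) ∧
      ∀ i : Fin m, Kseq i ∈ G ∧ j + 2 ≤ (Kseq i).card ∧ (Kseq i).card ≤ d + 1 ∧
        Jseq i.castSucc ∪ Jseq i.succ ⊆ Kseq i := by
  induction h with
  | refl => exact ⟨0, fun _ => J, Fin.elim0, rfl, rfl, fun _ => hJ, fun i => i.elim0⟩
  | @tail b c hJb hstep ih =>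
    obtain ⟨m, Jseq, Kseq, h0, hlast, hmem, hK⟩ := ih
    obtain ⟨hcS, K, hKG, hK1, hK2, hKsub⟩ := hStep _ _ hstep
    refine ⟨m + 1, Fin.snoc Jseq c, Fin.snoc Kseq K, ?_, ?_, ?_, ?_⟩
    · have : (0 : Fin (m + 2)) = Fin.castSucc 0 := rfl
      rw [this, Fin.snoc_castSucc, h0]
    · rw [Fin.snoc_last]
    · intro i
      refine Fin.lastCases ?_ (fun i => ?_) i
      · rw [Fin.snoc_last]; exact hcS
      · rw [Fin.snoc_castSucc]; exact hmem i
    · intro i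
      refine Fin.lastCases ?_ (fun i => ?_) i
      · refine ⟨by rw [Fin.snoc_last]; exact hKG, by rw [Fin.snoc_last]; exact hK1,
          by rw [Fin.snoc_last]; exact hK2, ?_⟩
        have h1 : (Fin.last m).castSucc = Fin.castSucc (Fin.last m) := rfl
        have h2 : (Fin.last m).succ = Fin.last (m + 1) := Fin.succ_last m
        rw [Fin.snoc_last, h1, Fin.snoc_castSucc, h2, Fin.snoc_last, hlast]
        exact hKsub
      · refine ⟨by rw [Fin.snoc_castSucc]; exact (hK i).1,
          by rw [Fin.snoc_castSucc]; exact (hK i).2.1,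
          by rw [Fin.snoc_castSucc]; exact (hK i).2.2.1, ?_⟩
        simp only [Fin.succ_castSucc, Fin.snoc_castSucc]
        exact (hK i).2.2.2

end AuxLemmas

/-- **Minimal supports are traversable** (Lemma 5.6). If `N_G ≠ ∅` and `f ∈ N_G` has
a support of minimum cardinality among elements of `N_G`, then `supp(f)` is
traversable in `G`. -/
theorem minimal_support_traversable
    (d j N : ℕ) (hd : 2 ≤ d) (hj : 1 ≤ j) (hjd : j ≤ d - 1)
    (R : Type) [AddCommGroup R] [Nontrivial R]
    (G : Set (Finset (Fin N))) (hG : IsDComplex d G)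
    (f : (Fin (j + 1) → Fin N) → R)
    (hf : IsCocycle G (j + 1) f) (hfN : ¬ GeneratedByCopies d j G f)
    (hmin : ∀ g : (Fin (j + 1) → Fin N) → R,
      IsCocycle G (j + 1) g → ¬ GeneratedByCopies d j G g →
      (cochainSupport f).ncard ≤ (cochainSupport g).ncard) :
    Traversable d j G (cochainSupport f) := by
  classical
  have hsuppmem : ∀ {σ : Fin (j + 1) → Fin N}, Function.Injective σ → f σ ≠ 0 →
      Finset.image σ Finset.univ ∈ cochainSupport f :=
    fun {σ} hinj hne => ⟨σ, hinj, rfl, hne⟩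
  set Step : Finset (Fin N) → Finset (Fin N) → Prop := fun A B =>
    B ∈ cochainSupport f ∧ ∃ K ∈ G, j + 2 ≤ K.card ∧ K.card ≤ d + 1 ∧ A ∪ B ⊆ K
    with hStepdef
  have key : ∀ A ∈ cochainSupport f, ∀ B ∈ cochainSupport f,
      Relation.ReflTransGen Step A B := by
    by_contra hcon
    push_neg at hcon
    obtain ⟨J0, hJ0, J1, hJ1, hnot⟩ := hcon
    set S1 : Set (Finset (Fin N)) :=
      {A | A ∈ cochainSupport f ∧ Relation.ReflTransGen Step J0 A} with hS1def
    have hJ0S1 : J0 ∈ S1 := ⟨hJ0, Relation.ReflTransGen.refl⟩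
    have hJ1S1 : J1 ∉ S1 := fun h => hnot h.2
    set f1 : (Fin (j + 1) → Fin N) → R :=
      fun σ => if Finset.image σ Finset.univ ∈ S1 then f σ else 0 with hf1def
    have himg : ∀ (σ : Fin (j + 1) → Fin N) (e : Equiv.Perm (Fin (j + 1))),
        Finset.image (σ ∘ e) Finset.univ = Finset.image σ Finset.univ := by
      intro σ e
      ext x
      simp only [Finset.mem_image, Finset.mem_univ, true_and, Function.comp_apply]
      constructor
      · rintro ⟨a, rfl⟩; exact ⟨e a, rfl⟩
      · rintro ⟨a, rfl⟩; exact ⟨e.symm a, by simp⟩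
    have hcochain1 : IsCochain G (j + 1) f1 := by
      refine ⟨fun σ h => ?_, fun σ a b hab => ?_⟩
      · simp only [hf1def]
        split <;> simp [hf.1.1 σ h]
      · simp only [hf1def, himg σ (Equiv.swap a b), hf.1.2 σ a b hab]
        split <;> simp
    have hcocycle1 : IsCocycle G (j + 1) f1 := by
      refine ⟨hcochain1, fun σ hσ => ?_⟩
      set K := Finset.image σ Finset.univ with hKdef
      have hKG : K ∈ G := hσ.2
      have hKcard : K.card = j + 2 := by
        rw [hKdef, Finset.card_image_of_injective _ hσ.1, Finset.card_univ,
          Fintype.card_fin]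
      have hKd : K.card ≤ d + 1 := hG.2 K hKG
      have hfaceinj : ∀ i : Fin (j + 2), Function.Injective (σ ∘ i.succAbove) :=
        fun i => hσ.1.comp (Fin.succAbove_right_injective)
      have hfacesub : ∀ i : Fin (j + 2),
          Finset.image (σ ∘ i.succAbove) Finset.univ ⊆ K := by
        intro i x hx
        simp only [Finset.mem_image, Finset.mem_univ, true_and,
          Function.comp_apply] at hx
        obtain ⟨a, rfl⟩ := hx
        exact Finset.mem_image_of_mem σ (Finset.mem_univ _)
      by_cases hcase : ∃ i : Fin (j + 2), f (σ ∘ i.succAbove) ≠ 0 ∧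
          Finset.image (σ ∘ i.succAbove) Finset.univ ∈ S1
      · obtain ⟨i0, hi0ne, hi0S1⟩ := hcase
        have hall : ∀ i : Fin (j + 2), f1 (σ ∘ i.succAbove) = f (σ ∘ i.succAbove) := by
          intro i
          simp only [hf1def]
          split_ifs with h
          · rfl
          · by_contra hne
            have hfne : f (σ ∘ i.succAbove) ≠ 0 := fun h0 => hne (h0 ▸ rfl)
            have hmemS : Finset.image (σ ∘ i.succAbove) Finset.univ ∈
                cochainSupport f := hsuppmem (hfaceinj i) hfne
            have hstep : Step (Finset.image (σ ∘ i0.succAbove) Finset.univ)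
                (Finset.image (σ ∘ i.succAbove) Finset.univ) :=
              ⟨hmemS, K, hKG, hKcard.ge, hKd,
                Finset.union_subset (hfacesub i0) (hfacesub i)⟩
            exact h ⟨hmemS, hi0S1.2.tail hstep⟩
        have heq : delta f1 σ = delta f σ := by
          unfold delta
          exact Finset.sum_congr rfl fun i _ => by rw [hall i]
        rw [heq]
        exact hf.2 σ hσ
      · have hall : ∀ i : Fin (j + 2), f1 (σ ∘ i.succAbove) = 0 := by
          intro i
          simp only [hf1def]
          split_ifs with h
          · by_contra hne
            exact hcase ⟨i, hne, h⟩
          · rfl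
        unfold delta
        simp [hall]
    have hsupp1 : cochainSupport f1 = S1 := by
      ext A
      constructor
      · rintro ⟨σ, hinj, rfl, hne⟩
        simp only [hf1def] at hne
        split_ifs at hne with h
        · exact h
        · exact absurd rfl hne
      · rintro ⟨hAS, hreach⟩
        obtain ⟨σ, hinj, hAimg, hne⟩ := hAS
        refine ⟨σ, hinj, hAimg, ?_⟩
        simp only [hf1def, hAimg]
        rw [if_pos ⟨⟨σ, hinj, hAimg, hne⟩, hreach⟩]
        exact hne
    have hcocycle2 : IsCocycle G (j + 1) (f - f1) := aux_isCocycle_sub hf hcocycle1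
    have hsupp2 : cochainSupport (f - f1) ⊆ cochainSupport f \ S1 := by
      rintro A ⟨σ, hinj, rfl, hne⟩
      rw [Pi.sub_apply] at hne
      by_cases h : Finset.image σ Finset.univ ∈ S1
      · exfalso
        apply hne
        simp [hf1def, h]
      · have h0 : f1 σ = 0 := by simp [hf1def, h]
        rw [h0, sub_zero] at hne
        exact ⟨⟨σ, hinj, rfl, hne⟩, h⟩
    by_cases hg1 : GeneratedByCopies d j G f1
    · by_cases hg2 : GeneratedByCopies d j G (f - f1)
      · apply hfN
        have hsplit : f = f1 + (f - f1) := by abel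
        rw [hsplit]
        exact aux_generated_add hg1 hg2
      · have hle := hmin (f - f1) hcocycle2 hg2
        have hsub : cochainSupport (f - f1) ⊆ cochainSupport f :=
          hsupp2.trans Set.diff_subset
        have hlt : (cochainSupport (f - f1)).ncard < (cochainSupport f).ncard := by
          apply Set.ncard_lt_ncard _ (Set.toFinite _)
          rw [Set.ssubset_iff_of_subset hsub]
          exact ⟨J0, hJ0, fun hmem => (hsupp2 hmem).2 hJ0S1⟩
        omega
    · have hle := hmin f1 hcocycle1 hg1
      have hlt : (cochainSupport f1).ncard < (cochainSupport f).ncard := by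
        rw [hsupp1]
        apply Set.ncard_lt_ncard _ (Set.toFinite _)
        rw [Set.ssubset_iff_of_subset (fun A hA => hA.1)]
        exact ⟨J1, hJ1, hJ1S1⟩
      omega
  intro J hJ J' hJ'
  exact aux_seq_of_reach d j G (cochainSupport f) Step
    (fun A B hAB => ⟨hAB.1, hAB.2⟩) hJ (key J hJ J' hJ')


end RSC
end
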